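/- arXiv:1107.5359 — 2 statements merged into one kernel-verified Lean document; each statement's English description precedes it below -/
import Mathlib

section
/- Let G be a connected graph on n vertices with Perron vector x = (x_1,...,x_n). Let v be a vertex, let v_1,...,v_k be neighbors of v, and let v_{k+1},...,v_{k+l} be non-neighbors of v (all distinct from v). Let G* be obtained from G by deleting the edges v v_i for 1 ≤ i ≤ k and adding the edges v v_j for k+1 ≤ j ≤ k+l. If x_1 + ... + x_k ≤ x_{k+1} + ... + x_{k+l}, then ρ(G) ≤ ρ(G*). -/
open Finset

noncomputable def specRad {n : ℕ} (G : SimpleGraph (Fin n)) : ℝ :=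
  letI : DecidableRel G.Adj := Classical.decRel _
  sSup (spectrum ℝ (G.adjMatrix ℝ))

noncomputable def adjMat {n : ℕ} (G : SimpleGraph (Fin n)) : Matrix (Fin n) (Fin n) ℝ :=
  letI : DecidableRel G.Adj := Classical.decRel _
  G.adjMatrix ℝ

noncomputable def minDeg {n : ℕ} (G : SimpleGraph (Fin n)) : ℕ :=
  letI : DecidableRel G.Adj := Classical.decRel _
  G.minDegree

/-- `x` is a Perron vector of `G`: a positive unit eigenvector for the spectral radius. -/
def IsPerronVector {n : ℕ} (G : SimpleGraph (Fin n)) (x : Fin n → ℝ) : Prop :=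
  (∀ i, 0 < x i) ∧ (∑ i, x i ^ 2 = 1) ∧ (adjMat G).mulVec x = specRad G • x

/-- Removing the vertex set `S` disconnects `G`. -/
def Disconnects {n : ℕ} (G : SimpleGraph (Fin n)) (S : Finset (Fin n)) : Prop :=
  ¬ (G.induce ((↑(Sᶜ) : Set (Fin n)))).Preconnected

/-- `G` is `m`-connected: `G` is the complete graph on `m+1` vertices, or `G` has at least
`m+2` vertices and no vertex cut of size at most `m-1`. -/
def IsKConnected {n : ℕ} (G : SimpleGraph (Fin n)) (m : ℕ) : Prop :=
  (n = m + 1 ∧ G = ⊤) ∨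
    (m + 2 ≤ n ∧ ∀ S : Finset (Fin n), S.card ≤ m - 1 → ¬ Disconnects G S)

/-- The graph `K_k + (K_{δ-k+1} ∪ K_{n-δ-1})`: vertices `0,…,k-1` are joined to everything,
vertices `k,…,δ` form one clique and vertices `δ+1,…,n-1` the other. -/
def Gkdn (k δ n : ℕ) : SimpleGraph (Fin n) where
  Adj a b := a ≠ b ∧ ((a : ℕ) < k ∨ (b : ℕ) < k ∨ ((a : ℕ) ≤ δ ∧ (b : ℕ) ≤ δ) ∨
    (δ < (a : ℕ) ∧ δ < (b : ℕ)))
  symm := ⟨fun a b h => ⟨h.1.symm, by tauto⟩⟩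
  loopless := ⟨fun a h => h.1 rfl⟩

open Matrix

lemma rayleigh_le_sSup {n : ℕ} (B : Matrix (Fin n) (Fin n) ℝ) (hB : B.IsHermitian)
    (x : Fin n → ℝ) (hx : ∑ i, x i ^ 2 = 1) :
    x ⬝ᵥ B *ᵥ x ≤ sSup (spectrum ℝ B) := by
  have hn : Nonempty (Fin n) := by
    rcases Nat.eq_zero_or_pos n with h | h
    · subst h; simp at hx
    · exact ⟨⟨0, h⟩⟩
  set U : Matrix (Fin n) (Fin n) ℝ := (hB.eigenvectorUnitary : Matrix (Fin n) (Fin n) ℝ) with hU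
  have hUs : U * star U = 1 := (Matrix.mem_unitaryGroup_iff).mp hB.eigenvectorUnitary.2
  set y : Fin n → ℝ := star U *ᵥ x with hy
  have hstar : star U = Uᵀ := by
    rw [Matrix.star_eq_conjTranspose, conjTranspose_eq_transpose_of_trivial]
  have hxy : x ᵥ* U = y := by
    rw [hy, hstar, Matrix.mulVec_transpose]
  have hyy : y ⬝ᵥ y = x ⬝ᵥ x :=
    calc y ⬝ᵥ y = y ⬝ᵥ (star U *ᵥ x) := by rw [← hy]
      _ = (y ᵥ* star U) ⬝ᵥ x := Matrix.dotProduct_mulVec _ _ _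
      _ = (U *ᵥ y) ⬝ᵥ x := by rw [hstar, Matrix.vecMul_transpose]
      _ = ((U * star U) *ᵥ x) ⬝ᵥ x := by rw [hy, Matrix.mulVec_mulVec]
      _ = x ⬝ᵥ x := by rw [hUs, Matrix.one_mulVec]
  have hmain : x ⬝ᵥ B *ᵥ x = ∑ j, hB.eigenvalues j * (y j)^2 := by
    conv_lhs => rw [hB.spectral_theorem, Unitary.conjStarAlgAut_apply]
    rw [← Matrix.mulVec_mulVec, ← Matrix.mulVec_mulVec, Matrix.dotProduct_mulVec, hxy, ← hy]
    simp [Matrix.mulVec_diagonal, dotProduct]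
    ring_nf
    exact Finset.sum_congr rfl fun j _ => by ring
  have hbdd : BddAbove (spectrum ℝ B) := by
    rw [hB.spectrum_real_eq_range_eigenvalues]
    exact (Set.finite_range _).bddAbove
  have hmem : ∀ j, hB.eigenvalues j ≤ sSup (spectrum ℝ B) := fun j =>
    le_csSup hbdd (hB.eigenvalues_mem_spectrum_real j)
  have hy1 : ∑ j, (y j)^2 = 1 := by
    have := hyy
    simp [dotProduct, ← sq] at this
    rw [this]
    simpa [sq] using hx
  calc x ⬝ᵥ B *ᵥ x = ∑ j, hB.eigenvalues j * (y j)^2 := hmain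
    _ ≤ ∑ j, sSup (spectrum ℝ B) * (y j)^2 :=
        Finset.sum_le_sum fun j _ => mul_le_mul_of_nonneg_right (hmem j) (sq_nonneg _)
    _ = sSup (spectrum ℝ B) := by rw [← Finset.mul_sum, hy1, mul_one]

lemma pair_sum {n : ℕ} (x : Fin n → ℝ) (v u : Fin n) (hu : u ≠ v) :
    ∑ a : Fin n, ∑ b : Fin n, (if s(a,b) = s(v,u) then x a * x b else 0)
      = 2 * (x v * x u) := by
  have key : ∀ a b : Fin n, (if s(a,b) = s(v,u) then x a * x b else 0)
      = (if a = v ∧ b = u then x a * x b else 0) + (if a = u ∧ b = v then x a * x b else 0) := by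
    intro a b
    by_cases h1 : a = v ∧ b = u
    · obtain ⟨rfl, rfl⟩ := h1
      simp [Sym2.eq_iff, hu, Ne.symm hu]
    · by_cases h2 : a = u ∧ b = v
      · obtain ⟨rfl, rfl⟩ := h2
        simp [Sym2.eq_iff, hu, Ne.symm hu]
      · have : ¬ s(a,b) = s(v,u) := by rw [Sym2.eq_iff]; tauto
        simp [this, h1, h2]
  simp_rw [key, Finset.sum_add_distrib, ite_and]
  simp [Finset.sum_ite_eq, Finset.sum_ite_eq']
  ring

theorem specRad_le_of_rotation {n k l : ℕ} (G : SimpleGraph (Fin n)) (hG : G.Connected)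
    (x : Fin n → ℝ) (hx : IsPerronVector G x)
    (v : Fin n) (w : Fin (k + l) ↪ Fin n) (hwv : ∀ i, w i ≠ v)
    (hnbr : ∀ i : Fin (k + l), (i : ℕ) < k → G.Adj v (w i))
    (hnon : ∀ i : Fin (k + l), k ≤ (i : ℕ) → ¬ G.Adj v (w i))
    (Gs : SimpleGraph (Fin n))
    (hGs : ∀ a b, Gs.Adj a b ↔
      ((G.Adj a b ∧ ∀ i : Fin (k + l), (i : ℕ) < k → s(a, b) ≠ s(v, w i)) ∨
        ∃ i : Fin (k + l), k ≤ (i : ℕ) ∧ s(a, b) = s(v, w i)))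
    (hsum : (∑ i ∈ univ.filter (fun i : Fin (k + l) => (i : ℕ) < k), x (w i)) ≤ (∑ i ∈ univ.filter (fun i : Fin (k + l) => k ≤ (i : ℕ)), x (w i))) :
    specRad G ≤ specRad Gs := by
  classical
  obtain ⟨hxpos, hxnorm, hxeig⟩ := hx
  have huniq : ∀ i j : Fin (k+l), s(v, w i) = s(v, w j) → i = j := by
    intro i j h
    rw [Sym2.eq_iff] at h
    rcases h with ⟨-, h⟩ | ⟨h, -⟩
    · exact w.injective h
    · exact absurd h.symm (hwv j)
  set A := adjMat G with hA
  set B := adjMat Gs with hBdef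
  have hAab : ∀ a b, A a b = if G.Adj a b then 1 else 0 := by
    intro a b
    rw [hA]; unfold adjMat
    rw [SimpleGraph.adjMatrix_apply]
  have hBab : ∀ a b, B a b = if Gs.Adj a b then 1 else 0 := by
    intro a b
    rw [hBdef]; unfold adjMat
    rw [SimpleGraph.adjMatrix_apply]
  have hBH : B.IsHermitian := by
    ext a b
    rw [Matrix.conjTranspose_apply, hBab, hBab, if_congr (Gs.adj_comm b a) rfl rfl]
    split <;> simp
  have hentry : ∀ a b, B a b = A a b
      + (∑ i ∈ univ.filter (fun i : Fin (k+l) => k ≤ (i:ℕ)), if s(a,b) = s(v, w i) then (1:ℝ) else 0)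
      - (∑ i ∈ univ.filter (fun i : Fin (k+l) => (i:ℕ) < k), if s(a,b) = s(v, w i) then (1:ℝ) else 0) := by
    intro a b
    by_cases hex : ∃ i : Fin (k+l), s(a,b) = s(v, w i)
    · obtain ⟨i, hi⟩ := hex
      have huniq' : ∀ j : Fin (k+l), s(a,b) = s(v, w j) ↔ j = i := by
        intro j
        constructor
        · intro h
          exact huniq j i (h.symm.trans hi)
        · rintro rfl; exact hi
      have hadji : G.Adj a b ↔ G.Adj v (w i) := by
        rw [Sym2.eq_iff] at hi
        rcases hi with ⟨rfl, rfl⟩ | ⟨rfl, rfl⟩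
        · exact Iff.rfl
        · exact G.adj_comm _ _
      simp_rw [huniq', Finset.sum_ite_eq' _ i (fun _ => (1:ℝ))]
      by_cases hk : (i:ℕ) < k
      · have h1 : A a b = 1 := by rw [hAab, if_pos (hadji.mpr (hnbr i hk))]
        have h2 : B a b = 0 := by
          rw [hBab, if_neg]
          rw [hGs]
          rintro (⟨-, hno⟩ | ⟨j, hj, hj2⟩)
          · exact hno i hk ((huniq' i).mpr rfl)
          · rw [huniq' j] at hj2; subst hj2; omega
        rw [h1, h2]
        simp [Finset.mem_filter, hk, Nat.not_le.mpr hk]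
      · push_neg at hk
        have h1 : A a b = 0 := by rw [hAab, if_neg (fun h => hnon i hk (hadji.mp h))]
        have h2 : B a b = 1 := by
          rw [hBab, if_pos]
          rw [hGs]
          exact Or.inr ⟨i, hk, (huniq' i).mpr rfl⟩
        rw [h1, h2]
        simp [Finset.mem_filter, hk, Nat.not_lt.mpr hk]
    · push_neg at hex
      have h0 : ∀ (s : Finset (Fin (k+l))),
          (∑ i ∈ s, if s(a,b) = s(v, w i) then (1:ℝ) else 0) = 0 :=
        fun s => Finset.sum_eq_zero fun i _ => if_neg (hex i)
      rw [h0, h0, hAab, hBab]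
      have : Gs.Adj a b ↔ G.Adj a b := by
        rw [hGs]
        constructor
        · rintro (⟨h, -⟩ | ⟨j, -, hj⟩)
          · exact h
          · exact absurd hj (hex j)
        · intro h; exact Or.inl ⟨h, fun i _ => hex i⟩
      rw [if_congr this rfl rfl]
      ring
  have expand : ∀ M : Matrix (Fin n) (Fin n) ℝ,
      x ⬝ᵥ M *ᵥ x = ∑ a, ∑ b, x a * M a b * x b := by
    intro M
    simp only [dotProduct, Matrix.mulVec, Finset.mul_sum]
    exact Finset.sum_congr rfl fun a _ => Finset.sum_congr rfl fun b _ => by ring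
  have hmulsum : ∀ (a b : Fin n) (s : Finset (Fin (k+l))),
      x a * (∑ i ∈ s, if s(a,b) = s(v, w i) then (1:ℝ) else 0) * x b
        = ∑ i ∈ s, (if s(a,b) = s(v, w i) then x a * x b else 0) := by
    intro a b s
    rw [Finset.mul_sum, Finset.sum_mul]
    exact Finset.sum_congr rfl fun i _ => by split <;> ring
  have swap3 : ∀ (s : Finset (Fin (k+l))) (f : Fin (k+l) → Fin n → Fin n → ℝ),
      (∑ a : Fin n, ∑ b : Fin n, ∑ i ∈ s, f i a b) = ∑ i ∈ s, ∑ a : Fin n, ∑ b : Fin n, f i a b := by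
    intro s f
    calc (∑ a : Fin n, ∑ b : Fin n, ∑ i ∈ s, f i a b)
        = ∑ a : Fin n, ∑ i ∈ s, ∑ b : Fin n, f i a b :=
          Finset.sum_congr rfl fun a _ => Finset.sum_comm
      _ = ∑ i ∈ s, ∑ a : Fin n, ∑ b : Fin n, f i a b := Finset.sum_comm
  have hquad : x ⬝ᵥ B *ᵥ x = x ⬝ᵥ A *ᵥ x
      + 2 * (x v * ∑ i ∈ univ.filter (fun i : Fin (k+l) => k ≤ (i:ℕ)), x (w i))
      - 2 * (x v * ∑ i ∈ univ.filter (fun i : Fin (k+l) => (i:ℕ) < k), x (w i)) := by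
    rw [expand B, expand A]
    have step1 : (∑ a : Fin n, ∑ b : Fin n, x a * B a b * x b)
        = (∑ a : Fin n, ∑ b : Fin n, (x a * A a b * x b
          + (∑ i ∈ univ.filter (fun i : Fin (k+l) => k ≤ (i:ℕ)), if s(a,b) = s(v, w i) then x a * x b else 0)
          - (∑ i ∈ univ.filter (fun i : Fin (k+l) => (i:ℕ) < k), if s(a,b) = s(v, w i) then x a * x b else 0))) := by
      refine Finset.sum_congr rfl fun a _ => Finset.sum_congr rfl fun b _ => ?_
      rw [hentry a b, ← hmulsum a b, ← hmulsum a b]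
      ring
    rw [step1]
    simp only [Finset.sum_sub_distrib, Finset.sum_add_distrib]
    rw [swap3, swap3]
    congr 1
    · congr 1
      rw [Finset.sum_congr rfl fun i _ => pair_sum x v (w i) (hwv i)]
      simp_rw [Finset.mul_sum]
    · rw [Finset.sum_congr rfl fun i _ => pair_sum x v (w i) (hwv i)]
      simp_rw [Finset.mul_sum]
  have h1 : specRad G = x ⬝ᵥ A *ᵥ x := by
    show specRad G = x ⬝ᵥ A.mulVec x
    rw [hxeig]
    rw [dotProduct_smul, smul_eq_mul]
    have : x ⬝ᵥ x = 1 := by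
      simpa [dotProduct, sq] using hxnorm
    rw [this, mul_one]
  have h2 : x ⬝ᵥ A *ᵥ x ≤ x ⬝ᵥ B *ᵥ x := by
    rw [hquad]
    nlinarith [hxpos v, hsum]
  have h3 : x ⬝ᵥ B *ᵥ x ≤ sSup (spectrum ℝ B) := rayleigh_le_sSup B hBH x hxnorm
  have h4 : specRad Gs = sSup (spectrum ℝ B) := rfl
  rw [h1, h4]
  exact h2.trans h3
end

section
/- Let G be a connected graph on n vertices with Perron vector x, vertex v, neighbors v_1,...,v_k of v and non-neighbors v_{k+1},...,v_{k+l} of v. Let G* be obtained from G by deleting edges v v_i (1 ≤ i ≤ k) and adding edges v v_j (k+1 ≤ j ≤ k+l). If x_1 + ... + x_k < x_{k+1} + ... + x_{k+l}, then ρ(G) < ρ(G*). -/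
open Finset

open Matrix

lemma rayleigh_le' {n : ℕ} {B : Matrix (Fin n) (Fin n) ℝ} (hB : B.IsHermitian)
    (y : Fin n → ℝ) (hy : ∑ i, y i ^ 2 = 1) :
    y ⬝ᵥ (B *ᵥ y) ≤ sSup (spectrum ℝ B) := by
  classical
  set U : Matrix (Fin n) (Fin n) ℝ := (hB.eigenvectorUnitary : Matrix (Fin n) (Fin n) ℝ) with hU
  set c : Fin n → ℝ := Uᵀ *ᵥ y with hc
  have hstar : star U = Uᵀ := by
    rw [star_eq_conjTranspose, conjTranspose_eq_transpose_of_trivial]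
  have hUU : U * Uᵀ = 1 := by
    rw [← hstar]; exact (Matrix.mem_unitaryGroup_iff).mp hB.eigenvectorUnitary.2
  have hcc : ∑ i, (c i) ^ 2 = 1 := by
    have : ∑ i, (c i) ^ 2 = c ⬝ᵥ c := by simp [dotProduct, sq]
    rw [this, hc, mulVec_transpose, ← dotProduct_mulVec, mulVec_vecMul, hUU,
      one_mulVec]
    simpa [dotProduct, sq] using hy
  have hquad : y ⬝ᵥ (B *ᵥ y) = ∑ i, hB.eigenvalues i * (c i)^2 := by
    conv_lhs => rw [hB.spectral_theorem, Unitary.conjStarAlgAut_apply]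
    rw [← hU, hstar, ← mulVec_mulVec, ← mulVec_mulVec, dotProduct_mulVec,
      ← mulVec_transpose, ← hc]
    simp only [dotProduct, mulVec_diagonal]
    apply Finset.sum_congr rfl
    intro i _
    simp only [Function.comp_apply, RCLike.ofReal_real_eq_id, id]
    ring
  have hbdd : BddAbove (spectrum ℝ B) := (Matrix.finite_spectrum B).bddAbove
  have hev : ∀ i, hB.eigenvalues i ≤ sSup (spectrum ℝ B) := fun i =>
    le_csSup hbdd (hB.eigenvalues_mem_spectrum_real i)
  calc y ⬝ᵥ (B *ᵥ y) = ∑ i, hB.eigenvalues i * (c i)^2 := hquad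
    _ ≤ ∑ i, sSup (spectrum ℝ B) * (c i)^2 := by
        apply Finset.sum_le_sum
        intro i _
        exact mul_le_mul_of_nonneg_right (hev i) (sq_nonneg _)
    _ = sSup (spectrum ℝ B) := by rw [← Finset.mul_sum, hcc, mul_one]

theorem specRad_lt_of_rotation {n k l : ℕ} (G : SimpleGraph (Fin n)) (hG : G.Connected)
    (x : Fin n → ℝ) (hx : IsPerronVector G x)
    (v : Fin n) (w : Fin (k + l) ↪ Fin n) (hwv : ∀ i, w i ≠ v)
    (hnbr : ∀ i : Fin (k + l), (i : ℕ) < k → G.Adj v (w i))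
    (hnon : ∀ i : Fin (k + l), k ≤ (i : ℕ) → ¬ G.Adj v (w i))
    (Gs : SimpleGraph (Fin n))
    (hGs : ∀ a b, Gs.Adj a b ↔
      ((G.Adj a b ∧ ∀ i : Fin (k + l), (i : ℕ) < k → s(a, b) ≠ s(v, w i)) ∨
        ∃ i : Fin (k + l), k ≤ (i : ℕ) ∧ s(a, b) = s(v, w i)))
    (hsum : (∑ i ∈ univ.filter (fun i : Fin (k + l) => (i : ℕ) < k), x (w i)) < (∑ i ∈ univ.filter (fun i : Fin (k + l) => k ≤ (i : ℕ)), x (w i))) :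
    specRad G < specRad Gs := by
  classical
  obtain ⟨hxpos, hxnorm, hxeig⟩ := hx
  have hAe : ∀ a b, adjMat G a b = if G.Adj a b then (1:ℝ) else 0 := by
    intro a b; unfold adjMat; by_cases h : G.Adj a b <;> simp [h]
  have hBe : ∀ a b, adjMat Gs a b = if Gs.Adj a b then (1:ℝ) else 0 := by
    intro a b; unfold adjMat; by_cases h : Gs.Adj a b <;> simp [h]
  set A : Matrix (Fin n) (Fin n) ℝ := adjMat G with hA
  set B : Matrix (Fin n) (Fin n) ℝ := adjMat Gs with hB
  have main : x ⬝ᵥ (A *ᵥ x) < x ⬝ᵥ (B *ᵥ x) := by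
    set ε : Fin (k + l) → ℝ := fun i => if (i : ℕ) < k then -1 else 1 with hε
    set g : Fin n → ℝ := fun u => ∑ i, ε i * (if w i = u then 1 else 0) with hg
    have gval : ∀ i, g (w i) = ε i := by
      intro i
      simp [hg, EmbeddingLike.apply_eq_iff_eq, mul_ite]
    have gzero : ∀ u, (∀ i, w i ≠ u) → g u = 0 := by
      intro u hu
      simp only [hg]
      apply Finset.sum_eq_zero
      intro i _
      simp [hu i]
    have key : ∀ a b, B a b = A a b + ((if a = v then g b else 0) + (if b = v then g a else 0)) := by
      intro a b
      by_cases h1 : ∃ i, a = v ∧ b = w i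
      · obtain ⟨i, ha, hb⟩ := h1
        subst ha; subst hb
        have hne : w i ≠ a := hwv i
        rw [hBe, hAe, if_pos rfl, if_neg hne, gval]
        by_cases hik : (i : ℕ) < k
        · have hAdj : G.Adj a (w i) := hnbr i hik
          have hnGs : ¬ Gs.Adj a (w i) := by
            rw [hGs]
            rintro (⟨-, hall⟩ | ⟨j, hj, hsymm⟩)
            · exact hall i hik rfl
            · rcases Sym2.eq_iff.mp hsymm with ⟨-, hwij⟩ | ⟨hvwj, -⟩
              · exact absurd hik (by simpa [w.injective hwij] using not_lt.mpr hj)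
              · exact hwv j hvwj.symm
          simp [hnGs, hAdj, hε, hik]
        · have hAdj : ¬ G.Adj a (w i) := hnon i (not_lt.mp hik)
          have hGsa : Gs.Adj a (w i) := by
            rw [hGs]; exact Or.inr ⟨i, not_lt.mp hik, rfl⟩
          simp [hGsa, hAdj, hε, hik]
      · by_cases h2 : ∃ i, b = v ∧ a = w i
        · obtain ⟨i, hb, ha⟩ := h2
          subst hb; subst ha
          have hne : w i ≠ b := hwv i
          rw [hBe, hAe, if_pos rfl, if_neg hne, gval]
          have hsw : s(w i, b) = s(b, w i) := Sym2.eq_swap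
          by_cases hik : (i : ℕ) < k
          · have hAdj : G.Adj (w i) b := (hnbr i hik).symm
            have hnGs : ¬ Gs.Adj (w i) b := by
              rw [hGs]
              rintro (⟨-, hall⟩ | ⟨j, hj, hsymm⟩)
              · exact hall i hik hsw
              · rw [hsw] at hsymm
                rcases Sym2.eq_iff.mp hsymm with ⟨-, hwij⟩ | ⟨hvwj, -⟩
                · exact absurd hik (by simpa [w.injective hwij] using not_lt.mpr hj)
                · exact hwv j hvwj.symm
            simp [hnGs, hAdj, hε, hik]
          · have hAdj : ¬ G.Adj (w i) b := fun h => hnon i (not_lt.mp hik) h.symm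
            have hGsa : Gs.Adj (w i) b := by
              rw [hGs]; exact Or.inr ⟨i, not_lt.mp hik, hsw⟩
            simp [hGsa, hAdj, hε, hik]
        · have t1 : (if a = v then g b else 0) = 0 := by
            split
            · apply gzero
              intro i hi
              exact h1 ⟨i, by assumption, hi.symm⟩
            · rfl
          have t2 : (if b = v then g a else 0) = 0 := by
            split
            · apply gzero
              intro i hi
              exact h2 ⟨i, by assumption, hi.symm⟩
            · rfl
          have hiff : Gs.Adj a b ↔ G.Adj a b := by
            rw [hGs]
            constructor
            · rintro (⟨h, -⟩ | ⟨j, -, hsymm⟩)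
              · exact h
              · rcases Sym2.eq_iff.mp hsymm with ⟨hav, hbw⟩ | ⟨haw, hbv⟩
                · exact absurd ⟨j, hav, hbw⟩ h1
                · exact absurd ⟨j, hbv, haw⟩ h2
            · intro h
              refine Or.inl ⟨h, fun j _ hsymm => ?_⟩
              rcases Sym2.eq_iff.mp hsymm with ⟨hav, hbw⟩ | ⟨haw, hbv⟩
              · exact absurd ⟨j, hav, hbw⟩ h1
              · exact absurd ⟨j, hbv, haw⟩ h2
          rw [hBe, hAe, t1, t2, add_zero, add_zero]
          by_cases h : G.Adj a b <;> simp [h, hiff]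
    set T : ℝ := ∑ b, g b * x b with hTdef
    have hT1 : T = ∑ i, ε i * x (w i) := by
      rw [hTdef]
      have e : ∀ b, g b * x b = ∑ i, ε i * (if w i = b then x b else 0) := by
        intro b
        rw [hg]
        rw [Finset.sum_mul]
        apply Finset.sum_congr rfl
        intro i _
        by_cases h : w i = b <;> simp [h]
      simp only [e]
      rw [Finset.sum_comm]
      apply Finset.sum_congr rfl
      intro i _
      rw [← Finset.mul_sum, Finset.sum_ite_eq]
      simp
    have hT : T = (∑ i ∈ univ.filter (fun i : Fin (k + l) => k ≤ (i : ℕ)), x (w i))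
        - (∑ i ∈ univ.filter (fun i : Fin (k + l) => (i : ℕ) < k), x (w i)) := by
      rw [hT1, ← Finset.sum_filter_add_sum_filter_not univ (fun i : Fin (k + l) => (i : ℕ) < k)]
      have e1 : ∑ i ∈ univ.filter (fun i : Fin (k + l) => (i : ℕ) < k), ε i * x (w i)
          = -∑ i ∈ univ.filter (fun i : Fin (k + l) => (i : ℕ) < k), x (w i) := by
        rw [← Finset.sum_neg_distrib]
        apply Finset.sum_congr rfl
        intro i hi
        simp only [Finset.mem_filter] at hi
        simp [hε, hi.2]
      have e2 : ∑ i ∈ univ.filter (fun i : Fin (k + l) => ¬ (i : ℕ) < k), ε i * x (w i)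
          = ∑ i ∈ univ.filter (fun i : Fin (k + l) => k ≤ (i : ℕ)), x (w i) := by
        simp only [not_lt]
        apply Finset.sum_congr rfl
        intro i hi
        simp only [Finset.mem_filter] at hi
        simp [hε, not_lt.mpr hi.2]
      rw [e1, e2]
      ring
    have hTpos : 0 < T := by rw [hT]; linarith
    have hexp : x ⬝ᵥ (B *ᵥ x) = x ⬝ᵥ (A *ᵥ x) + (x v * T + T * x v) := by
      have e1 : ∀ a, (B *ᵥ x) a = (A *ᵥ x) a + ((if a = v then T else 0) + g a * x v) := by
        intro a
        simp only [Matrix.mulVec, dotProduct, key, add_mul, Finset.sum_add_distrib]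
        congr 1
        congr 1
        · by_cases h : a = v <;> simp [h, hTdef]
        · simp [ite_mul, Finset.sum_ite_eq']
      simp only [dotProduct, e1, mul_add, Finset.sum_add_distrib]
      congr 1
      have e2 : ∑ a, x a * (if a = v then T else 0) = x v * T := by
        simp [mul_ite, Finset.sum_ite_eq']
      have e3 : ∑ a, x a * (g a * x v) = T * x v := by
        rw [hTdef, Finset.sum_mul]
        apply Finset.sum_congr rfl
        intro a _
        ring
      rw [e2, e3]
    rw [hexp]
    have := hxpos v
    nlinarith
  have hxx : x ⬝ᵥ x = 1 := by simpa [dotProduct, sq] using hxnorm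
  have hAxx : x ⬝ᵥ (A *ᵥ x) = specRad G := by
    rw [show A *ᵥ x = specRad G • x from hxeig, dotProduct_smul, hxx, smul_eq_mul, mul_one]
  have hherm : B.IsHermitian := by
    show Bᴴ = B
    rw [Matrix.conjTranspose_eq_transpose_of_trivial]
    rw [hB]
    unfold adjMat
    exact SimpleGraph.transpose_adjMatrix _
  have hray : x ⬝ᵥ (B *ᵥ x) ≤ specRad Gs := by
    have hspec : specRad Gs = sSup (spectrum ℝ B) := rfl
    rw [hspec]
    exact rayleigh_le' hherm x hxnorm
  linarith
end
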